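/- arXiv:1701.06364 — 4 statements merged into one kernel-verified Lean document; each statement's English description precedes it below -/
import Mathlib

section
/- For every positive integer k there exists a digraph in which every vertex has out-degree at least 2k-2 but which does not contain k pairwise vertex-disjoint directed cycles; consequently f(k) ≥ 2k-1. (Such a digraph is the complete digraph on 2k-1 vertices, which has a bidirectional edge between every pair of distinct vertices and no loops.) -/
/-- A nonempty list of pairwise distinct vertices forms a directed cycle:
consecutive vertices are adjacent and the last vertex is adjacent to the first.
Lists of length 1 are loops, lists of length 2 are bidirectional edges. -/
def IsCycle {V : Type} (Adj : V → V → Prop) (c : List V) : Prop :=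
  c ≠ [] ∧ c.Nodup ∧ c.Chain' Adj ∧ ∀ x ∈ c.getLast?, ∀ y ∈ c.head?, Adj x y

/-- The digraph `Adj` contains `k` pairwise vertex-disjoint directed cycles. -/
def HasDisjointCycles {V : Type} (Adj : V → V → Prop) (k : ℕ) : Prop :=
  ∃ c : Fin k → List V, (∀ i, IsCycle Adj (c i)) ∧
    Pairwise fun i j => ∀ x, x ∈ c i → x ∉ c j

/-!
In a loopless digraph every cycle has at least two vertices, so `k` disjoint cycles need at
least `2k` vertices. The complete digraph on `2k - 1` vertices is loopless and has out-degree
`2k - 2` everywhere.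
-/

section

variable {V : Type} {Adj : V → V → Prop}

theorem IsCycle.two_le_length (hirr : ∀ v, ¬ Adj v v) {c : List V} (hc : IsCycle Adj c) :
    2 ≤ c.length := by
  obtain ⟨hne, -, -, hclose⟩ := hc
  match c, hne, hclose with
  | [a], _, hclose => exact absurd (hclose a rfl a rfl) (hirr a)
  | _ :: _ :: _, _, _ => simp

theorem HasDisjointCycles.two_mul_le_card [Fintype V] [DecidableEq V] (hirr : ∀ v, ¬ Adj v v)
    {k : ℕ} (h : HasDisjointCycles Adj k) : 2 * k ≤ Fintype.card V := by
  obtain ⟨c, hcyc, hdisj⟩ := h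
  have hpairwise :
      (↑(Finset.univ : Finset (Fin k)) : Set (Fin k)).PairwiseDisjoint fun i => (c i).toFinset :=
    fun i _ j _ hij => Finset.disjoint_left.mpr fun x hi hj =>
      hdisj hij x (List.mem_toFinset.mp hi) (List.mem_toFinset.mp hj)
  calc 2 * k = ∑ _i : Fin k, 2 := by simp [mul_comm]
    _ ≤ ∑ i, (c i).toFinset.card := Finset.sum_le_sum fun i _ => by
      rw [List.toFinset_card_of_nodup (hcyc i).2.1]
      exact (hcyc i).two_le_length hirr
    _ = (Finset.univ.biUnion fun i => (c i).toFinset).card := (Finset.card_biUnion hpairwise).symm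
    _ ≤ Fintype.card V := Finset.card_le_univ _

end

theorem ncard_setOf_ne {V : Type} [Finite V] (v : V) : {u | v ≠ u}.ncard = Nat.card V - 1 := by
  rw [← Set.ncard_singleton v, ← Set.ncard_compl]
  congr 1
  ext u
  simp [eq_comm]

/-- For every positive `k` there is a digraph with minimum out-degree at least
`2k-2` without `k` disjoint cycles (the complete digraph on `2k-1` vertices),
hence `f(k) ≥ 2k-1`. -/
theorem f_ge_lower_bound (k : ℕ) (hk : 0 < k) :
    ∃ (V : Type), Finite V ∧ Nonempty V ∧ ∃ Adj : V → V → Prop,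
      (∀ v, 2 * k - 2 ≤ {u | Adj v u}.ncard) ∧ ¬ HasDisjointCycles Adj k := by
  refine ⟨Fin (2 * k - 1), inferInstance, ⟨⟨0, by omega⟩⟩, (· ≠ ·), fun v => ?_, fun h => ?_⟩
  · rw [ncard_setOf_ne, Nat.card_eq_fintype_card, Fintype.card_fin]
    omega
  · have := h.two_mul_le_card fun v hv => hv rfl
    rw [Fintype.card_fin] at this
    omega
end

section
/- Every digraph in which every vertex has out-degree at least 3 contains 2 pairwise vertex-disjoint directed cycles (the upper bound f(2) ≤ 3). -/
/-!
Take a counterexample on the fewest vertices and pass to a spanning subdigraph in which every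
out-degree is exactly 3. A loop or digon, together with a cycle avoiding its at most two vertices,
would give two disjoint cycles. Every arc `v → w` has a common in-neighbour of `v` and `w`:
otherwise deleting `v` and redirecting the arcs entering `v` to `w` keeps the digraph 3-out, and
two disjoint cycles there lift back. Hence every in-neighbourhood contains a cycle, so any two
vertices have a common in-neighbour, and counting pairs gives `n ≤ 7`; counting arcs then forces a
tournament, in which every in-degree is at most `n - 4 ≤ 3`. Finally the three out-neighbours of a
vertex `y` span either a cyclic triangle, disjoint from a cycle in the in-neighbourhood of `y`, or a
transitive one whose sink `t` has in-neighbourhood `{y, p, q}` with `y → p, q`, leaving no common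
in-neighbour for the arc `y → t`.
-/

open Finset

section
variable {V : Type} {R S : V → V → Prop} {l : List V}

theorem isCycle_iff_chain : IsCycle R l ↔ l ≠ [] ∧ l.Nodup ∧ (l : Cycle V).Chain R := by
  cases l with
  | nil => simp [IsCycle]
  | cons a l =>
    change _ ∧ _ ∧ List.IsChain R (a :: l) ∧ _ ↔ _
    rw [Cycle.chain_coe_cons, ← List.cons_append, List.isChain_append]
    simp

theorem IsCycle.mono (h : ∀ a b, R a b → S a b) (hl : IsCycle R l) : IsCycle S l :=
  let ⟨hne, hnd, hch, hwrap⟩ := hl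
  ⟨hne, hnd, hch.imp fun a b => h a b, fun x hx y hy => h _ _ (hwrap x hx y hy)⟩

theorem IsCycle.reverse (hl : IsCycle (flip R) l) : IsCycle R l.reverse := by
  obtain ⟨hne, hnd, hch, hwrap⟩ := hl
  refine ⟨by simpa, by simpa, List.isChain_reverse.2 hch, fun x hx y hy => ?_⟩
  rw [List.getLast?_reverse] at hx
  rw [List.head?_reverse] at hy
  exact hwrap y hy x hx

theorem IsCycle.exists_adj_mem (hl : IsCycle R l) {x : V} (hx : x ∈ l) : ∃ y ∈ l, R x y := by
  obtain ⟨-, -, hch, hwrap⟩ := hl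
  obtain ⟨s, t, rfl⟩ := List.append_of_mem hx
  cases t with
  | nil =>
    obtain ⟨y, hy⟩ := Option.isSome_iff_exists.1 (by simp : (s ++ [x]).head?.isSome)
    exact ⟨y, List.mem_of_mem_head? hy, hwrap x (by simp) y hy⟩
  | cons y t => exact ⟨y, by simp, (List.isChain_append_cons_cons.1 hch).2.1⟩

theorem HasDisjointCycles.mono {k : ℕ} (h : ∀ a b, R a b → S a b)
    (hR : HasDisjointCycles R k) : HasDisjointCycles S k :=
  let ⟨c, hc, hdisj⟩ := hR
  ⟨c, fun i => (hc i).mono h, hdisj⟩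

def IsOneOutOn (R : V → V → Prop) (s : Set V) : Prop :=
  s.Nonempty ∧ ∀ x ∈ s, ∃ y ∈ s, R x y

theorem IsCycle.isOneOutOn (hl : IsCycle R l) : IsOneOutOn R {x | x ∈ l} :=
  ⟨List.exists_mem_of_ne_nil _ hl.1, fun _ hx => hl.exists_adj_mem hx⟩

theorem Function.exists_mem_periodicPts {α : Type*} [Finite α] [Nonempty α] (f : α → α) :
    ∃ x, x ∈ Function.periodicPts f := by
  obtain ⟨i, j, hij, heq⟩ :=
    Finite.exists_ne_map_eq_of_infinite fun n => f^[n] (Classical.arbitrary α)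
  wlog hlt : i < j generalizing i j
  · exact this j i hij.symm heq.symm (hij.lt_or_gt.resolve_left hlt)
  refine ⟨f^[i] (Classical.arbitrary α),
    Function.mk_mem_periodicPts (n := j - i) (Nat.sub_pos_of_lt hlt) ?_⟩
  rw [Function.IsPeriodicPt, Function.IsFixedPt, ← Function.iterate_add_apply,
    Nat.sub_add_cancel hlt.le, heq]

theorem IsOneOutOn.exists_isCycle [Finite V] {s : Set V} (hs : IsOneOutOn R s) :
    ∃ l, IsCycle R l ∧ ∀ x ∈ l, x ∈ s := by
  have : Nonempty s := hs.1.to_subtype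
  choose f hf using fun x : s => hs.2 x x.2
  let g : s → s := fun x => ⟨f x, (hf x).1⟩
  obtain ⟨x, hx⟩ := Function.exists_mem_periodicPts g
  refine ⟨((List.range (Function.minimalPeriod g x)).map fun n => g^[n] x).map Subtype.val,
    isCycle_iff_chain.2 ⟨?_, ?_, ?_⟩, fun y hy => ?_⟩
  · simp only [ne_eq, List.map_eq_nil_iff, List.range_eq_nil]
    exact (Function.minimalPeriod_pos_of_mem_periodicPts hx).ne'
  · exact (Function.nodup_periodicOrbit (f := g) (x := x)).map Subtype.val_injective
  · rw [← Cycle.map_coe, Cycle.chain_map]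
    exact (Function.periodicOrbit_chain' _ hx).2 fun n => by
      rw [Function.iterate_succ_apply']; exact (hf _).2
  · obtain ⟨y, -, rfl⟩ := List.mem_map.1 hy
    exact y.2

theorem IsOneOutOn.exists_subset_of_flip [Finite V] {s : Set V} (hs : IsOneOutOn (flip R) s) :
    ∃ t ⊆ s, IsOneOutOn R t := by
  obtain ⟨l, hl, hls⟩ := hs.exists_isCycle
  exact ⟨{x | x ∈ l.reverse}, fun x hx => hls x (List.mem_reverse.1 hx),
    hl.reverse.isOneOutOn⟩

theorem hasDisjointCycles_two_of_isOneOutOn [Finite V] {s t : Set V} (hs : IsOneOutOn R s)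
    (ht : IsOneOutOn R t) (hst : Disjoint s t) : HasDisjointCycles R 2 := by
  obtain ⟨c₁, hc₁, hc₁s⟩ := hs.exists_isCycle
  obtain ⟨c₂, hc₂, hc₂t⟩ := ht.exists_isCycle
  have h : ∀ x ∈ c₁, x ∉ c₂ := fun x h₁ h₂ =>
    Set.disjoint_left.1 hst (hc₁s x h₁) (hc₂t x h₂)
  refine ⟨![c₁, c₂], Fin.forall_fin_two.2 ⟨hc₁, hc₂⟩, fun i j hij => ?_⟩
  fin_cases i <;> fin_cases j
  · exact absurd rfl hij
  · simpa using h
  · simpa using fun x h₂ h₁ => h x h₁ h₂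
  · exact absurd rfl hij

theorem HasDisjointCycles.exists_isOneOutOn (h : HasDisjointCycles R 2) :
    ∃ s t, Disjoint s t ∧ IsOneOutOn R s ∧ IsOneOutOn R t := by
  obtain ⟨c, hc, hdisj⟩ := h
  exact ⟨{x | x ∈ c 0}, {x | x ∈ c 1}, Set.disjoint_left.2 (hdisj (by decide)),
    (hc 0).isOneOutOn, (hc 1).isOneOutOn⟩

theorem hasDisjointCycles_two_of_isOneOutOn_of_ncard_lt [Finite V] {s : Set V}
    (hs : IsOneOutOn R s) (hdeg : ∀ v, s.ncard < {u | R v u}.ncard) : HasDisjointCycles R 2 := by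
  have hout (v : V) : ∃ u ∈ {u | R v u}, u ∉ s :=
    Set.exists_mem_notMem_of_ncard_lt_ncard (hdeg v)
  obtain ⟨v, -⟩ := hs.1
  obtain ⟨u, -, hu⟩ := hout v
  exact hasDisjointCycles_two_of_isOneOutOn hs
    ⟨⟨u, hu⟩, fun x _ => (hout x).imp fun _ h => ⟨h.2, h.1⟩⟩ disjoint_compl_right

def deleteRedirect (R : V → V → Prop) (v w : V) (a b : {x // x ≠ v}) : Prop :=
  R a b ∨ R a v ∧ (b : V) = w

theorem ncard_le_ncard_deleteRedirect [Finite V] {v w : V} (hwv : w ≠ v)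
    (hno : ∀ u, R u v → ¬R u w) (a : {x // x ≠ v}) :
    {u | R a u}.ncard ≤ {b | deleteRedirect R v w a b}.ncard := by
  classical
  let f (u : V) : {x // x ≠ v} := if h : u = v then ⟨w, hwv⟩ else ⟨u, h⟩
  refine Set.ncard_le_ncard_of_injOn f (fun u hu => ?_) (fun u₁ hu₁ u₂ hu₂ h => ?_)
  · by_cases huv : u = v
    · subst huv
      exact Or.inr ⟨hu, by simp [f]⟩
    · exact Or.inl (by simpa [f, huv] using hu)
  · by_cases h₁ : u₁ = v <;> by_cases h₂ : u₂ = v <;> simp [f, h₁, h₂] at h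
    · exact h₁.trans h₂.symm
    · exact absurd (h ▸ hu₂ : R a w) (hno a (h₁ ▸ hu₁))
    · exact absurd (h ▸ hu₁ : R a w) (hno a (h₂ ▸ hu₂))
    · exact h

theorem IsOneOutOn.of_deleteRedirect {v w : V} (hvw : R v w) {s : Set {x // x ≠ v}}
    (hs : IsOneOutOn (deleteRedirect R v w) s) :
    IsOneOutOn R {x | x ∈ Subtype.val '' s ∨ x = v ∧ w ∈ Subtype.val '' s} := by
  refine ⟨(hs.1.image _).mono fun x hx => Or.inl hx, ?_⟩
  rintro x (⟨a, ha, rfl⟩ | ⟨rfl, hw⟩)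
  · obtain ⟨b, hb, hab | ⟨hav, hbw⟩⟩ := hs.2 a ha
    · exact ⟨b, Or.inl ⟨b, hb, rfl⟩, hab⟩
    · exact ⟨v, Or.inr ⟨rfl, hbw ▸ ⟨b, hb, rfl⟩⟩, hav⟩
  · exact ⟨w, Or.inl hw, hvw⟩

theorem HasDisjointCycles.of_deleteRedirect [Finite V] {v w : V} (hvw : R v w)
    (h : HasDisjointCycles (deleteRedirect R v w) 2) : HasDisjointCycles R 2 := by
  obtain ⟨s, t, hst, hs, ht⟩ := h.exists_isOneOutOn
  refine hasDisjointCycles_two_of_isOneOutOn (hs.of_deleteRedirect hvw)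
    (ht.of_deleteRedirect hvw) (Set.disjoint_left.2 ?_)
  have hval := (Set.disjoint_image_iff Subtype.val_injective).2 hst
  rintro x (hxs | ⟨rfl, hws⟩) (hxt | ⟨hxv, hwt⟩)
  · exact Set.disjoint_left.1 hval hxs hxt
  · obtain ⟨a, -, rfl⟩ := hxs
    exact a.2 hxv
  · obtain ⟨a, -, ha⟩ := hxt
    exact a.2 ha
  · exact Set.disjoint_left.1 hval hws hwt

theorem exists_isOneOutOn_subset_pred [Finite V] (hpred : ∀ v w, R v w → ∃ u, R u v ∧ R u w)
    {y : V} (hy : ∃ w, R y w) : ∃ s ⊆ {u | R u y}, IsOneOutOn R s :=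
  let ⟨w, hyw⟩ := hy
  IsOneOutOn.exists_subset_of_flip ⟨(hpred y w hyw).imp fun _ h => h.1,
    fun u hu => (hpred u y hu).imp fun _ h => ⟨h.2, h.1⟩⟩

section Counting
variable [Fintype V] [DecidableRel R]

theorem card_le_of_forall_exists_common_pred {d : ℕ} (hout : ∀ v, #{u | R v u} = d)
    (h : ∀ y y', y ≠ y' → ∃ x, R x y ∧ R x y') : Fintype.card V ≤ d * (d - 1) + 1 := by
  classical
  have hsub : (univ : Finset V).offDiag ⊆
      univ.biUnion fun x => ({u | R x u} : Finset V).offDiag := by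
    intro p hp
    have hne := (mem_offDiag.1 hp).2.2
    obtain ⟨x, hx₁, hx₂⟩ := h p.1 p.2 hne
    exact mem_biUnion.2
      ⟨x, mem_univ _, mem_offDiag.2 ⟨by simpa using hx₁, by simpa using hx₂, hne⟩⟩
  have hcard := (card_le_card hsub).trans card_biUnion_le
  simp only [offDiag_card, hout, sum_const, card_univ, smul_eq_mul, ← Nat.mul_sub_one] at hcard
  rcases Nat.eq_zero_or_pos (Fintype.card V) with h0 | hpos
  · omega
  · have := Nat.le_of_mul_le_mul_left hcard hpos
    omega

theorem card_pred_add_card_succ_lt (hdig : ∀ u w, R u w → ¬R w u) (t : V) :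
    #{u | R u t} + #{u | R t u} < Fintype.card V := by
  classical
  have hdisj : Disjoint ({u | R u t} : Finset V) ({u | R t u} : Finset V) :=
    disjoint_filter.2 fun u _ hut htu => hdig u t hut htu
  have hsub : ({u | R u t} : Finset V) ∪ ({u | R t u} : Finset V) ⊆ univ.erase t := by
    intro u hu
    refine mem_erase.2 ⟨?_, mem_univ u⟩
    rintro rfl
    simp only [mem_union, mem_filter, mem_univ, true_and, or_self] at hu
    exact hdig u u hu hu
  have := card_le_card hsub
  rw [card_union_of_disjoint hdisj, card_erase_of_mem (mem_univ t), card_univ] at this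
  have : 0 < Fintype.card V := Fintype.card_pos_iff.2 ⟨t⟩
  omega

theorem adj_or_adj_of_card_le (hdig : ∀ u w, R u w → ¬R w u)
    (h : Fintype.card V * Fintype.card V - Fintype.card V ≤ 2 * ∑ v, #{u | R v u}) {x y : V}
    (hxy : x ≠ y) : R x y ∨ R y x := by
  classical
  set E : Finset (V × V) := {p | R p.1 p.2}
  have hE : #E = ∑ v, #{u | R v u} := by
    simp only [E, card_filter, Fintype.sum_prod_type]
  have hdisj : Disjoint E (E.image Prod.swap) := by
    simp only [disjoint_left, mem_image, E, mem_filter, mem_univ, true_and, not_exists, not_and]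
    rintro ⟨a, b⟩ hab ⟨c, d⟩ hcd he
    simp only [Prod.swap_prod_mk, Prod.mk.injEq] at he
    exact hdig a b hab (he.1 ▸ he.2 ▸ hcd)
  have hsub : E ∪ E.image Prod.swap ⊆ univ.offDiag := by
    rintro ⟨a, b⟩ hab
    simp only [mem_union, mem_image, E, mem_filter, mem_univ, true_and, Prod.exists,
      Prod.swap_prod_mk, Prod.mk.injEq] at hab
    refine mem_offDiag.2 ⟨mem_univ _, mem_univ _, show a ≠ b from ?_⟩
    rintro rfl
    obtain hab | ⟨c, d, hcd, rfl, rfl⟩ := hab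
    · exact hdig a a hab hab
    · exact hdig c c hcd hcd
  have heq := eq_of_subset_of_card_le hsub (by
    rw [card_union_of_disjoint hdisj, card_image_of_injective _ Prod.swap_injective, offDiag_card,
      card_univ, hE]
    omega)
  have hmem : (x, y) ∈ E ∪ E.image Prod.swap := heq ▸ by simpa using hxy
  simpa [E] using hmem

end Counting

theorem eq_of_adj_of_card_pred_le_three [Fintype V] [DecidableRel R]
    (hdig : ∀ u w, R u w → ¬R w u) (hpred : ∀ v w, R v w → ∃ u, R u v ∧ R u w)
    {y t p q : V} (hin : #{u | R u t} ≤ 3) (hyt : R y t) (hyp : R y p) (hyq : R y q) (hpt : R p t)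
    (hqt : R q t) : p = q := by
  classical
  by_contra hpq
  have hne (x : V) (hyx : R y x) : y ≠ x := by
    rintro rfl
    exact hdig y y hyx hyx
  have htri := eq_of_subset_of_card_le (s := {y, p, q}) (t := {u | R u t})
    (by simp [insert_subset_iff, hyt, hpt, hqt])
    (by rw [card_eq_three.2 ⟨y, p, q, hne p hyp, hne q hyq, hpq, rfl⟩]; exact hin)
  obtain ⟨u, huy, hut⟩ := hpred y t hyt
  have hu : u ∈ ({y, p, q} : Finset V) := htri ▸ by simpa using hut
  simp only [mem_insert, mem_singleton] at hu
  rcases hu with rfl | rfl | rfl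
  · exact hdig u u huy huy
  · exact hdig y u hyp huy
  · exact hdig y u hyq huy

theorem hasDisjointCycles_two_of_triangle_in_succ [Finite V] (hdig : ∀ u w, R u w → ¬R w u)
    (hpred : ∀ v w, R v w → ∃ u, R u v ∧ R u w) {y p q r : V} (hyp : R y p) (hyq : R y q)
    (hyr : R y r) (hpq : R p q) (hqr : R q r) (hrp : R r p) : HasDisjointCycles R 2 := by
  obtain ⟨s, hs, hs1⟩ := exists_isOneOutOn_subset_pred hpred ⟨p, hyp⟩
  refine hasDisjointCycles_two_of_isOneOutOn hs1 (t := {p, q, r})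
    ⟨⟨p, by simp⟩, by simp [hpq, hqr, hrp]⟩ (Set.disjoint_left.2 fun x hxs hx => ?_)
  have hyx : R y x := by rcases hx with rfl | rfl | rfl <;> assumption
  exact hdig x y (hs hxs) hyx

theorem hasDisjointCycles_two_of_tournament [Fintype V] [DecidableRel R]
    (hdig : ∀ u w, R u w → ¬R w u) (htour : ∀ x y, x ≠ y → R x y ∨ R y x)
    (hin : ∀ t, #{u | R u t} ≤ 3) (hpred : ∀ v w, R v w → ∃ u, R u v ∧ R u w) {y : V}
    (hy : #{u | R y u} = 3) : HasDisjointCycles R 2 := by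
  classical
  obtain ⟨a, b, c, hab, hac, hbc, habc⟩ := card_eq_three.1 hy
  have hsucc : ∀ x ∈ ({a, b, c} : Finset V), R y x := by
    rw [← habc]
    simp
  have hya := hsucc a (by simp)
  have hyb := hsucc b (by simp)
  have hyc := hsucc c (by simp)
  rcases htour a b hab with h₁ | h₁ <;> rcases htour b c hbc with h₂ | h₂ <;>
    rcases htour a c hac with h₃ | h₃
  · exact absurd (eq_of_adj_of_card_pred_le_three hdig hpred (hin _) hyc hya hyb h₃ h₂) hab
  · exact hasDisjointCycles_two_of_triangle_in_succ hdig hpred hya hyb hyc h₁ h₂ h₃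
  · exact absurd (eq_of_adj_of_card_pred_le_three hdig hpred (hin _) hyb hya hyc h₁ h₂) hac
  · exact absurd (eq_of_adj_of_card_pred_le_three hdig hpred (hin _) hyb hya hyc h₁ h₂) hac
  · exact absurd (eq_of_adj_of_card_pred_le_three hdig hpred (hin _) hyc hya hyb h₃ h₂) hab
  · exact absurd (eq_of_adj_of_card_pred_le_three hdig hpred (hin _) hya hyb hyc h₁ h₃) hbc
  · exact hasDisjointCycles_two_of_triangle_in_succ hdig hpred hya hyc hyb h₃ h₂ h₁
  · exact absurd (eq_of_adj_of_card_pred_le_three hdig hpred (hin _) hya hyb hyc h₁ h₃) hbc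

theorem hasDisjointCycles_two_of_ncard_eq_three [Finite V] [Nonempty V]
    (hout : ∀ v, {u | R v u}.ncard = 3)
    (hpred : ∀ v w, R v w → w ≠ v → ∃ u, R u v ∧ R u w) : HasDisjointCycles R 2 := by
  classical
  have := Fintype.ofFinite V
  by_contra hcon
  have hdig (u w : V) (huw : R u w) (hwu : R w u) : False := hcon <|
    hasDisjointCycles_two_of_isOneOutOn_of_ncard_lt (s := {u, w})
      ⟨⟨u, by simp⟩, by simp [huw, hwu]⟩
      fun v => (Set.ncard_insert_le _ _).trans_lt (by simp [hout])
  have hpred' (v w : V) (h : R v w) : ∃ u, R u v ∧ R u w :=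
    hpred v w h (by rintro rfl; exact hdig _ _ h h)
  have hout' (v : V) : #{u | R v u} = 3 := by
    rw [← hout v, ← Set.ncard_coe_finset, coe_filter_univ]
  have hsucc (v : V) : ∃ w, R v w :=
    Set.nonempty_of_ncard_ne_zero (s := {u | R v u}) (by rw [hout v]; norm_num)
  have hcommon (y y' : V) : ∃ x, R x y ∧ R x y' := by
    by_contra! h
    obtain ⟨s, hs, hs1⟩ := exists_isOneOutOn_subset_pred hpred' (hsucc y)
    obtain ⟨t, ht, ht1⟩ := exists_isOneOutOn_subset_pred hpred' (hsucc y')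
    exact hcon (hasDisjointCycles_two_of_isOneOutOn hs1 ht1
      (Set.disjoint_left.2 fun x hxs hxt => h x (hs hxs) (ht hxt)))
  have hn := card_le_of_forall_exists_common_pred hout' fun y y' _ => hcommon y y'
  have htour (x y : V) (hxy : x ≠ y) : R x y ∨ R y x := by
    refine adj_or_adj_of_card_le hdig ?_ hxy
    simp only [hout', sum_const, card_univ, smul_eq_mul]
    have := Nat.mul_le_mul_right (Fintype.card V) hn
    omega
  have hin (t : V) : #{u | R u t} ≤ 3 := by
    have := card_pred_add_card_succ_lt hdig t
    rw [hout'] at this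
    omega
  obtain ⟨y⟩ := ‹Nonempty V›
  exact hcon (hasDisjointCycles_two_of_tournament hdig htour hin hpred' (hout' y))

end

/-- Every 3-out digraph contains two vertex-disjoint directed cycles: `f(2) ≤ 3`. -/
theorem f_two_le_three (V : Type) [Finite V] [Nonempty V] (Adj : V → V → Prop)
    (hdeg : ∀ v, 3 ≤ {u | Adj v u}.ncard) :
    HasDisjointCycles Adj 2 := by
  induction hn : Nat.card V using Nat.strong_induction_on generalizing V with
  | _ n ih =>
    choose N hNsub hNcard using fun v => Set.exists_subset_card_eq (hdeg v)
    suffices HasDisjointCycles (fun v u => u ∈ N v) 2 from this.mono fun v u h => hNsub v h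
    by_contra hcon
    refine hcon (hasDisjointCycles_two_of_ncard_eq_three hNcard fun v w hvw hwv => ?_)
    by_contra! hno
    have : Nonempty {x // x ≠ v} := ⟨⟨w, hwv⟩⟩
    refine hcon (HasDisjointCycles.of_deleteRedirect hvw (ih _ ?_ _ _ (fun a => ?_) rfl))
    · exact hn ▸ Finite.card_subtype_lt (x := v) (by simp)
    · exact (hNcard a).ge.trans (ncard_le_ncard_deleteRedirect hwv hno a)
end

section
/- A (k,r)-critical digraph contains no loops and no bidirectional edges: for every vertex v, Adj v v fails, and for every pair of distinct vertices u, w, it is not the case that both Adj u w and Adj w u hold. -/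
/-- A digraph is `r`-out if every vertex has out-degree at least `r`. -/
def IsROut {V : Type} (Adj : V → V → Prop) (r : ℕ) : Prop :=
  ∀ v, r ≤ {u | Adj v u}.ncard

/-- A digraph `Adj` on a finite nonempty vertex type `V` is `(k,r)`-critical if:
(1) it is `r`-out; (2) it does not contain `k+1` disjoint cycles;
(3) it has the smallest number of vertices subject to (1),(2);
(4) the smallest number of edges subject to (1),(2),(3); and
(5) every `(r-2)`-out digraph contains `k` disjoint cycles. -/
def IsCritical (k r : ℕ) {V : Type} [Finite V] [Nonempty V] (Adj : V → V → Prop) : Prop :=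
  IsROut Adj r ∧
  ¬ HasDisjointCycles Adj (k + 1) ∧
  (∀ (W : Type) [Finite W] [Nonempty W] (B : W → W → Prop),
    IsROut B r → ¬ HasDisjointCycles B (k + 1) → Nat.card V ≤ Nat.card W) ∧
  (∀ (W : Type) [Finite W] [Nonempty W] (B : W → W → Prop),
    IsROut B r → ¬ HasDisjointCycles B (k + 1) → Nat.card W = Nat.card V →
      {p : V × V | Adj p.1 p.2}.ncard ≤ {p : W × W | B p.1 p.2}.ncard) ∧
  (∀ (W : Type) [Finite W] [Nonempty W] (B : W → W → Prop),
    IsROut B (r - 2) → HasDisjointCycles B k)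

/-!
A loop or a bidirectional edge is a cycle `C` on at most two vertices. Deleting `C` lowers every
out-degree by at most two, so by (5) what remains contains `k` disjoint cycles; together with `C`
these are `k + 1` disjoint cycles, contradicting (2). If nothing remains, then `r ≤ 2` and (5),
applied to the edgeless one-vertex digraph, forces `k = 0`.
-/

def deleteVerts {V : Type} (Adj : V → V → Prop) (S : Set V) (a b : {x // x ∉ S}) : Prop :=
  Adj a b

section Cycles

variable {V : Type} {Adj : V → V → Prop}

theorem IsCycle.map {W : Type} {B : W → W → Prop} {f : W → V} (hf : f.Injective)
    (hB : ∀ a b, B a b → Adj (f a) (f b)) {c : List W} (h : IsCycle B c) :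
    IsCycle Adj (c.map f) := by
  obtain ⟨hne, hnd, hch, hlast⟩ := h
  refine ⟨by simpa using hne, hnd.map hf, List.isChain_map_of_isChain f hB hch, ?_⟩
  simp only [List.getLast?_map, List.head?_map, Option.mem_def, Option.map_eq_some_iff]
  rintro _ ⟨x, hx, rfl⟩ _ ⟨y, hy, rfl⟩
  exact hB x y (hlast x hx y hy)

theorem isCycle_singleton {v : V} (h : Adj v v) : IsCycle Adj [v] :=
  ⟨by simp, by simp, List.isChain_singleton v, by simpa using h⟩

theorem isCycle_pair {u w : V} (hne : u ≠ w) (huw : Adj u w) (hwu : Adj w u) :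
    IsCycle Adj [u, w] :=
  ⟨by simp, by simp [hne], List.isChain_pair.mpr huw, by simpa using hwu⟩

theorem not_isCycle_bot {c : List V} : ¬ IsCycle (fun _ _ : V => False) c := by
  rintro ⟨hne, -, -, hlast⟩
  exact hlast _ (List.getLast?_eq_some_getLast hne) _ (List.head?_eq_some_head hne)

theorem hasDisjointCycles_zero : HasDisjointCycles Adj 0 :=
  ⟨Fin.elim0, fun i => i.elim0, fun i => i.elim0⟩

theorem hasDisjointCycles_bot_iff {k : ℕ} :
    HasDisjointCycles (fun _ _ : V => False) k ↔ k = 0 := by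
  refine ⟨fun ⟨c, hc, _⟩ => ?_, fun hk => hk ▸ hasDisjointCycles_zero⟩
  by_contra hk
  exact not_isCycle_bot (hc ⟨0, Nat.pos_of_ne_zero hk⟩)

theorem IsCycle.hasDisjointCycles_succ {c₀ : List V} {k : ℕ} (h₀ : IsCycle Adj c₀)
    (h : HasDisjointCycles (deleteVerts Adj {x | x ∈ c₀}) k) :
    HasDisjointCycles Adj (k + 1) := by
  obtain ⟨c, hc, hdisj⟩ := h
  have hcyc : ∀ i, IsCycle Adj ((c i).map Subtype.val) := fun i =>
    (hc i).map Subtype.val_injective fun _ _ h => h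
  refine ⟨Fin.cons c₀ fun i => (c i).map Subtype.val, Fin.cases h₀ hcyc, ?_⟩
  have hout : ∀ i, ∀ x ∈ (c i).map Subtype.val, x ∉ c₀ := by
    simp only [List.mem_map]
    rintro i _ ⟨a, -, rfl⟩
    exact a.2
  intro i j hij
  cases i using Fin.cases <;> cases j using Fin.cases
  · exact absurd rfl hij
  · exact fun x hx hx' => hout _ x hx' hx
  · exact hout _
  · simp only [Fin.cons_succ, List.mem_map]
    rintro _ ⟨a, ha, rfl⟩ ⟨b, hb, hba⟩
    exact hdisj (fun h => hij (congrArg _ h)) a ha (Subtype.val_injective hba ▸ hb)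

end Cycles

theorem ncard_setOf_mem_le_length {α : Type} (l : List α) : {x | x ∈ l}.ncard ≤ l.length := by
  classical
  simpa [← List.coe_toFinset] using l.toFinset_card_le

section OutDegree

variable {V : Type} [Finite V] {Adj : V → V → Prop} {r : ℕ}

theorem IsROut.le_card [Nonempty V] (h : IsROut Adj r) : r ≤ Nat.card V :=
  (h (Classical.arbitrary V)).trans (Set.ncard_le_card _)

theorem IsROut.deleteVerts (h : IsROut Adj r) {S : Set V} {m : ℕ} (hS : S.ncard ≤ m) :
    IsROut (_root_.deleteVerts Adj S) (r - m) := by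
  intro x
  have hcover : {y | Adj x y} ⊆ Subtype.val '' {u | _root_.deleteVerts Adj S x u} ∪ S := by
    intro y hy
    by_cases hyS : y ∈ S
    · exact Or.inr hyS
    · exact Or.inl ⟨⟨y, hyS⟩, hy, rfl⟩
  have := (Set.ncard_le_ncard hcover).trans (Set.ncard_union_le _ _)
  rw [Set.ncard_image_of_injective _ Subtype.val_injective] at this
  have := h x
  omega

end OutDegree

theorem IsCritical.two_lt_length_of_isCycle {k r : ℕ} {V : Type} [Finite V] [Nonempty V]
    {Adj : V → V → Prop} (hc : IsCritical k r Adj) {c₀ : List V} (hcyc : IsCycle Adj c₀) :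
    2 < c₀.length := by
  obtain ⟨hout, hfree, -, -, hsmall⟩ := hc
  by_contra! hlen
  have hS : {x | x ∈ c₀}.ncard ≤ 2 := (ncard_setOf_mem_le_length c₀).trans hlen
  refine hfree (hcyc.hasDisjointCycles_succ ?_)
  rcases isEmpty_or_nonempty {x // x ∉ {x | x ∈ c₀}} with hempty | _
  · have hall : {x | x ∈ c₀} = Set.univ :=
      Set.eq_univ_of_forall fun x => by_contra fun hx => hempty.false ⟨x, hx⟩
    have hr : r ≤ 2 := hout.le_card.trans (by simpa [hall] using hS)
    have hk : k = 0 := hasDisjointCycles_bot_iff.mp <| hsmall Unit (fun _ _ => False)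
      fun _ => by simp only [Set.ofPred_false, Set.ncard_empty]; omega
    exact hk ▸ hasDisjointCycles_zero
  · exact hsmall _ _ (hout.deleteVerts hS)

theorem critical_no_loops_no_bidirectional_general (k r : ℕ)
    (V : Type) [Finite V] [Nonempty V] (Adj : V → V → Prop)
    (hc : IsCritical k r Adj) :
    (∀ v, ¬ Adj v v) ∧ ∀ u w, u ≠ w → ¬ (Adj u w ∧ Adj w u) :=
  ⟨fun _ hv => by simpa using hc.two_lt_length_of_isCycle (isCycle_singleton hv),
    fun _ _ hne ⟨huw, hwu⟩ => by
      simpa using hc.two_lt_length_of_isCycle (isCycle_pair hne huw hwu)⟩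

/-- A `(k,r)`-critical digraph has no loops and no bidirectional edges. -/
theorem critical_no_loops_no_bidirectional (k r : ℕ) (hk : 0 < k) (hr : 0 < r)
    (V : Type) [Finite V] [Nonempty V] (Adj : V → V → Prop)
    (hc : IsCritical k r Adj) :
    (∀ v, ¬ Adj v v) ∧ ∀ u w, u ≠ w → ¬ (Adj u w ∧ Adj w u) :=
  critical_no_loops_no_bidirectional_general k r V Adj hc
end

section
/- In a (k,r)-critical digraph, every vertex has out-degree exactly r. -/
/-!
Deleting an edge leaving a vertex of out-degree greater than `r` keeps the digraph `r`-out and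
cannot create disjoint cycles, yet it has one edge less; this contradicts edge-minimality.
-/

section DeleteEdge

variable {V : Type} {Adj Adj' : V → V → Prop}

theorem IsCycle.mono_s8 (h : ∀ ⦃a b⦄, Adj a b → Adj' a b) {c : List V} (hc : IsCycle Adj c) :
    IsCycle Adj' c :=
  ⟨hc.1, hc.2.1, hc.2.2.1.imp h, fun x hx y hy => h (hc.2.2.2 x hx y hy)⟩

theorem HasDisjointCycles.mono_s8 (h : ∀ ⦃a b⦄, Adj a b → Adj' a b) {k : ℕ}
    (hk : HasDisjointCycles Adj k) : HasDisjointCycles Adj' k :=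
  let ⟨c, hcyc, hdisj⟩ := hk
  ⟨c, fun i => (hcyc i).mono_s8 h, hdisj⟩

def deleteEdge (Adj : V → V → Prop) (v u : V) : V → V → Prop :=
  fun a b => Adj a b ∧ (a, b) ≠ (v, u)

theorem outNeighbors_deleteEdge_self (Adj : V → V → Prop) (v u : V) :
    {x | deleteEdge Adj v u v x} = {x | Adj v x} \ {u} := by
  ext x
  simp [deleteEdge]

theorem outNeighbors_deleteEdge_of_ne (Adj : V → V → Prop) {v w : V} (u : V) (hw : w ≠ v) :
    {x | deleteEdge Adj v u w x} = {x | Adj w x} := by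
  ext x
  simp [deleteEdge, hw]

theorem edges_deleteEdge (Adj : V → V → Prop) (v u : V) :
    {p : V × V | deleteEdge Adj v u p.1 p.2} = {p : V × V | Adj p.1 p.2} \ {(v, u)} := by
  ext ⟨a, b⟩
  simp [deleteEdge]

theorem IsROut.deleteEdge {r : ℕ} (hAdj : IsROut Adj r) {v u : V} (huv : Adj v u)
    (hv : r < {x | Adj v x}.ncard) : IsROut (deleteEdge Adj v u) r := by
  intro w
  by_cases hw : w = v
  · subst hw
    rw [outNeighbors_deleteEdge_self, Set.ncard_sdiff_singleton_of_mem (s := {x | Adj w x}) huv]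
    omega
  · rw [outNeighbors_deleteEdge_of_ne Adj u hw]
    exact hAdj w

theorem ncard_edges_deleteEdge_lt [Finite V] {v u : V} (huv : Adj v u) :
    {p : V × V | deleteEdge Adj v u p.1 p.2}.ncard < {p : V × V | Adj p.1 p.2}.ncard := by
  rw [edges_deleteEdge]
  exact Set.ncard_sdiff_singleton_lt_of_mem (show (v, u) ∈ {p : V × V | Adj p.1 p.2} from huv)

end DeleteEdge

theorem critical_outdegree_exact_general (k r : ℕ)
    (V : Type) [Finite V] [Nonempty V] (Adj : V → V → Prop)
    (hc : IsCritical k r Adj) :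
    ∀ v, {u | Adj v u}.ncard = r := by
  obtain ⟨hout, hcycles, -, hedges, -⟩ := hc
  intro v
  by_contra hne
  have hgt : r < {u | Adj v u}.ncard := lt_of_le_of_ne (hout v) (Ne.symm hne)
  obtain ⟨u, huv⟩ : {u | Adj v u}.Nonempty := Set.nonempty_of_ncard_ne_zero (by omega)
  have hdel := hedges V (deleteEdge Adj v u) (hout.deleteEdge huv hgt)
    (fun h => hcycles (h.mono_s8 fun _ _ => And.left)) rfl
  exact (ncard_edges_deleteEdge_lt huv).not_ge hdel

/-- In a `(k,r)`-critical digraph every vertex has out-degree exactly `r`. -/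
theorem critical_outdegree_exact (k r : ℕ) (hk : 0 < k) (hr : 0 < r)
    (V : Type) [Finite V] [Nonempty V] (Adj : V → V → Prop)
    (hc : IsCritical k r Adj) :
    ∀ v, {u | Adj v u}.ncard = r :=
  critical_outdegree_exact_general k r V Adj hc
end
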